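/- Let f : M → M be a homeomorphism and ℱ = {Y₁, Y₂, Y₃, …, Y_L} a finite family of subsets such that Y₁ ∪ Y₂ is wandering for f. Then [c_{f,ℱ}(n)] = sup{ [c_{f,ℱ₁}(n)], [c_{f,ℱ₂}(n)] }, where ℱ₁ = {Y₁, Y₃, …, Y_L} and ℱ₂ = {Y₂, Y₃, …, Y_L}. -/

import Mathlib

open Function Metric Set Topology Filter

variable {M : Type*}

/-- Y is a wandering set for f: f^n(Y) ∩ Y = ∅ for all n ≥ 1. -/
def Wandering (f : M → M) (Y : Set M) : Prop :=
  ∀ n : ℕ, 1 ≤ n → f^[n] '' Y ∩ Y = ∅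

/-- The non-wandering set Ω(f). -/
def NonwanderingSet [TopologicalSpace M] (f : M → M) : Set M :=
  {x | ∀ U : Set M, IsOpen U → x ∈ U → ∃ n : ℕ, 1 ≤ n ∧ (f^[n] '' U ∩ U).Nonempty}

/-- The word w (with letters in ℱ ∪ {∞}, where `some j` is the letter Y_j and `none`
is the letter ∞ = complement of ∪ℱ) is a coding of the orbit segment of x. -/
def Codes {L : ℕ} (f : M → M) (Y : Fin L → Set M) {n : ℕ}
    (w : Fin n → Option (Fin L)) (x : M) : Prop :=
  ∀ i : Fin n, (w i).elim (f^[(i : ℕ)] x ∉ ⋃ j, Y j) (fun j => f^[(i : ℕ)] x ∈ Y j)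

/-- 𝒜_n(f,ℱ): the set of all codings of all orbit segments of length n. -/
def CodingWords {L : ℕ} (f : M → M) (Y : Fin L → Set M) (n : ℕ) :
    Set (Fin n → Option (Fin L)) :=
  {w | ∃ x : M, Codes f Y w x}

/-- c_{f,ℱ}(n) = #𝒜_n(f,ℱ). -/
noncomputable def codingCount {L : ℕ} (f : M → M) (Y : Fin L → Set M) (n : ℕ) : ℕ :=
  Nat.card (CodingWords f Y n)

/-- The sets Y₁,…,Y_L are mutually singular: for every N there are a point x and times
t i with f^[t i] x ∈ Y i and |t i − t j| > N for i ≠ j. -/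
def MutuallySingular {L : ℕ} (f : M → M) (Y : Fin L → Set M) : Prop :=
  ∀ N : ℕ, ∃ x : M, ∃ t : Fin L → ℕ,
    (∀ i, f^[t i] x ∈ Y i) ∧ ∀ i j, i ≠ j → N < max (t i - t j) (t j - t i)

/-- E is an (n,ε)-separated set for f. -/
def Separated [MetricSpace M] (f : M → M) (ε : ℝ) (n : ℕ) (E : Set M) : Prop :=
  ∀ x ∈ E, ∀ y ∈ E, x ≠ y → ∃ i : ℕ, i < n ∧ ε ≤ dist (f^[i] x) (f^[i] y)

/-- s_{f,ε}(n): the maximal cardinality of an (n,ε)-separated set. -/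
noncomputable def sepCount [MetricSpace M] (f : M → M) (ε : ℝ) (n : ℕ) : ℕ :=
  sSup {k : ℕ | ∃ E : Finset M, Separated f ε n (E : Set M) ∧ E.card = k}

/-- The full orbit of p under the homeomorphism with inverse g. -/
def FullOrbit (f g : M → M) (p : M) : Set M :=
  {y | ∃ n : ℕ, y = f^[n] p ∨ y = g^[n] p}

/-- The stable set of a set A: points whose forward orbit converges to A. -/
def StableSetOf [MetricSpace M] (f : M → M) (A : Set M) : Set M :=
  {x | Tendsto (fun n => infDist (f^[n] x) A) atTop (nhds 0)}

/-- p is a periodic point of f. -/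
def IsPeriodicPoint (f : M → M) (p : M) : Prop := ∃ k : ℕ, 1 ≤ k ∧ f^[k] p = p

/-- The edge relation of the connection graph: p, q are periodic points with distinct
orbits and W^u(θ(p)) ∩ W^s(θ(q)) ≠ ∅. -/
def Conn [MetricSpace M] (f : M ≃ₜ M) (p q : M) : Prop :=
  IsPeriodicPoint ⇑f p ∧ IsPeriodicPoint ⇑f q ∧
  FullOrbit ⇑f ⇑f.symm p ≠ FullOrbit ⇑f ⇑f.symm q ∧
  (StableSetOf ⇑f.symm (FullOrbit ⇑f ⇑f.symm p) ∩
    StableSetOf ⇑f (FullOrbit ⇑f ⇑f.symm q)).Nonempty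

/-- L = L(f) is the length of the longest directed path in the connection graph. -/
def IsMaxPathLength [MetricSpace M] (f : M ≃ₜ M) (L : ℕ) : Prop :=
  (∃ c : Fin (L + 1) → M, ∀ i : Fin L, Conn f (c i.castSucc) (c i.succ)) ∧
  ∀ m : ℕ, (∃ c : Fin (m + 1) → M, ∀ i : Fin m, Conn f (c i.castSucc) (c i.succ)) → m ≤ L

/-- A topological rendering of the Morse–Smale condition: finite non-wandering set,
all non-wandering points periodic, and the no-tangency consequence of transversality:
if W^u(θ(p)) accumulates on W^s(θ(q)) then it meets it. -/
def MorseSmaleLike [MetricSpace M] (f : M ≃ₜ M) : Prop :=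
  (NonwanderingSet ⇑f).Finite ∧
  (∀ x ∈ NonwanderingSet ⇑f, IsPeriodicPoint ⇑f x) ∧
  ∀ p q : M, IsPeriodicPoint ⇑f p → IsPeriodicPoint ⇑f q →
    (closure (StableSetOf ⇑f.symm (FullOrbit ⇑f ⇑f.symm p)) ∩
      StableSetOf ⇑f (FullOrbit ⇑f ⇑f.symm q)).Nonempty →
    (StableSetOf ⇑f.symm (FullOrbit ⇑f ⇑f.symm p) ∩
      StableSetOf ⇑f (FullOrbit ⇑f ⇑f.symm q)).Nonempty

/-!
Since `Y₁ ∪ Y₂` is wandering, no orbit visits it twice, so no coding word contains both letters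
`Y₁` and `Y₂`. A word avoiding one of these letters is a coding word for the family with that
set deleted, so `c_{f,ℱ} ≤ c_{f,ℱ₁} + c_{f,ℱ₂} ≤ 2 max (c_{f,ℱ₁}, c_{f,ℱ₂})`. Conversely,
deleting sets from a family never increases the number of coding words.
-/

theorem Wandering.eq_of_iterate_mem {f : M → M} {S : Set M} (hS : Wandering f S) {x : M}
    {a b : ℕ} (ha : f^[a] x ∈ S) (hb : f^[b] x ∈ S) : a = b := by
  suffices ∀ {a b}, a < b → f^[a] x ∈ S → f^[b] x ∈ S → False by
    rcases lt_trichotomy a b with h | h | h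
    exacts [(this h ha hb).elim, h, (this h hb ha).elim]
  intro a b hab ha hb
  have hback : f^[b - a] (f^[a] x) = f^[b] x := by
    rw [← iterate_add_apply, Nat.sub_add_cancel hab.le]
  have hmem : f^[b] x ∈ f^[b - a] '' S ∩ S := ⟨⟨_, ha, hback⟩, hb⟩
  rwa [hS (b - a) (by omega)] at hmem

section Coding

variable {L L' : ℕ} {f : M → M} {Y : Fin L → Set M} {n : ℕ}

theorem codingCount_eq_ncard (f : M → M) (Y : Fin L → Set M) (n : ℕ) :
    codingCount f Y n = (CodingWords f Y n).ncard := rfl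

theorem exists_codes (f : M → M) (Y : Fin L → Set M) (n : ℕ) (x : M) :
    ∃ w : Fin n → Option (Fin L), Codes f Y w x := by
  have hletter (i : Fin n) : ∃ o : Option (Fin L),
      o.elim (f^[(i : ℕ)] x ∉ ⋃ j, Y j) (fun j => f^[(i : ℕ)] x ∈ Y j) := by
    by_cases h : f^[(i : ℕ)] x ∈ ⋃ j, Y j
    · obtain ⟨j, hj⟩ := mem_iUnion.1 h
      exact ⟨some j, hj⟩
    · exact ⟨none, h⟩
  choose w hw using hletter
  exact ⟨w, hw⟩

theorem Codes.of_map {e : Fin L' → Fin L} {w : Fin n → Option (Fin L')} {x : M}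
    (h : Codes f Y (fun i => (w i).map e) x) : Codes f (Y ∘ e) w x := by
  intro i
  have hi := h i
  cases hw : w i with
  | none =>
    simp only [hw, Option.map_none, Option.elim] at hi
    exact fun hmem => hi (iUnion_mono' (fun k => ⟨e k, subset_rfl⟩) hmem)
  | some k => simpa [hw] using hi

theorem ncard_codingWords_mem_range_le (e : Fin L' → Fin L) :
    {w ∈ CodingWords f Y n | ∀ i, w i ∈ range (Option.map e)}.ncard ≤
      codingCount f (Y ∘ e) n := by
  rw [codingCount_eq_ncard]
  refine (ncard_le_ncard ?_).trans (ncard_image_le (f := fun w' i => (w' i).map e))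
  rintro w ⟨⟨x, hx⟩, hw⟩
  choose w' hw' using hw
  obtain rfl : (fun i => (w' i).map e) = w := funext hw'
  exact ⟨w', ⟨x, hx.of_map⟩, rfl⟩

/-- A coding for `Y ∘ e` extends to a coding for `Y` of the same point by reading each letter `∞`
in some coding of that point for `Y`; restricting back along `partialInv e` recovers it. -/
theorem codingCount_comp_le {e : Fin L' → Fin L} (he : Injective e) :
    codingCount f (Y ∘ e) n ≤ codingCount f Y n := by
  classical
  simp only [codingCount_eq_ncard]
  refine (ncard_le_ncard ?_).trans
    (ncard_image_le (f := fun w i => (w i).bind (partialInv e)))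
  rintro w' ⟨x, hx'⟩
  obtain ⟨w₀, hx₀⟩ := exists_codes f Y n x
  refine ⟨fun i => (w' i).elim (w₀ i) (some ∘ e), ⟨x, fun i => ?_⟩, funext fun i => ?_⟩
  · have hi := hx' i
    cases hw : w' i with
    | none => simpa [hw] using hx₀ i
    | some k => simpa [hw] using hi
  · have hi := hx' i
    cases hw : w' i with
    | some k => simp [hw, partialInv_left he]
    | none =>
      have hi₀ := hx₀ i
      cases hw₀ : w₀ i with
      | none => simp [hw, hw₀]
      | some j =>
        simp only [hw, hw₀, Option.elim, Option.bind_some] at hi hi₀ ⊢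
        cases hinv : partialInv e j with
        | none => rfl
        | some k =>
          rw [he.isPartialInv] at hinv
          exact (hi (mem_iUnion.2 ⟨k, by simpa [hinv] using hi₀⟩)).elim

theorem Codes.eq_of_wandering {w : Fin n → Option (Fin L)} {x : M} (hx : Codes f Y w x)
    {p q : Fin L} (hwand : Wandering f (Y p ∪ Y q)) {i j : Fin n} (hi : w i = some p)
    (hj : w j = some q) : p = q := by
  have hxi : f^[(i : ℕ)] x ∈ Y p := by simpa [hi] using hx i
  have hxj : f^[(j : ℕ)] x ∈ Y q := by simpa [hj] using hx j
  obtain rfl : i = j := Fin.ext (hwand.eq_of_iterate_mem (.inl hxi) (.inr hxj))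
  exact Option.some_injective _ (hi.symm.trans hj)

theorem Option.mem_range_map_succAbove {o : Option (Fin (L + 1))} {p : Fin (L + 1)}
    (h : o ≠ some p) : o ∈ range (Option.map p.succAbove) := by
  cases o with
  | none => exact ⟨none, rfl⟩
  | some j =>
    obtain ⟨k, rfl⟩ := Fin.exists_succAbove_eq fun hj => h (congrArg some hj)
    exact ⟨some k, rfl⟩

theorem codingCount_le_add_of_wandering {Y : Fin (L + 1) → Set M} {p q : Fin (L + 1)}
    (hpq : p ≠ q) (hwand : Wandering f (Y p ∪ Y q)) (n : ℕ) :
    codingCount f Y n ≤ codingCount f (Y ∘ p.succAbove) n + codingCount f (Y ∘ q.succAbove) n := by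
  set avoiding := fun r : Fin (L + 1) =>
    {w ∈ CodingWords f Y n | ∀ i, w i ∈ range (Option.map r.succAbove)}
  have hsplit : CodingWords f Y n ⊆ avoiding p ∪ avoiding q := by
    rintro w ⟨x, hx⟩
    by_cases hp : ∃ i, w i = some p
    · obtain ⟨i, hi⟩ := hp
      refine .inr ⟨⟨x, hx⟩, fun j => Option.mem_range_map_succAbove fun hj => ?_⟩
      exact hpq (hx.eq_of_wandering hwand hi hj)
    · push Not at hp
      exact .inl ⟨⟨x, hx⟩, fun i => Option.mem_range_map_succAbove (hp i)⟩
  calc codingCount f Y n ≤ (avoiding p ∪ avoiding q).ncard := ncard_le_ncard hsplit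
    _ ≤ (avoiding p).ncard + (avoiding q).ncard := ncard_union_le _ _
    _ ≤ _ := add_le_add (ncard_codingWords_mem_range_le _) (ncard_codingWords_mem_range_le _)

end Coding

theorem coding_count_union_wandering_general {M : Type*} [MetricSpace M] (f : M ≃ₜ M)
    {L : ℕ} (A B : Set M) (Z : Fin L → Set M)
    (hwand : Wandering ⇑f (A ∪ B)) :
    ∃ c₁ c₂ : ℝ, 0 < c₁ ∧ 0 < c₂ ∧ ∀ n : ℕ,
      c₁ * max (codingCount ⇑f (Fin.cons A Z) n : ℝ) (codingCount ⇑f (Fin.cons B Z) n : ℝ) ≤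
          (codingCount ⇑f (Fin.cons A (Fin.cons B Z)) n : ℝ) ∧
      (codingCount ⇑f (Fin.cons A (Fin.cons B Z)) n : ℝ) ≤
          c₂ * max (codingCount ⇑f (Fin.cons A Z) n : ℝ) (codingCount ⇑f (Fin.cons B Z) n : ℝ) := by
  set Y : Fin (L + 2) → Set M := Fin.cons A (Fin.cons B Z)
  have hA : Y ∘ Fin.succAbove 1 = Fin.cons A Z := by
    ext i; cases i using Fin.cases <;> simp [Y]
  have hB : Y ∘ Fin.succAbove 0 = Fin.cons B Z := by
    ext i; cases i using Fin.cases <;> simp [Y]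
  have hAY (n : ℕ) : codingCount f (Fin.cons A Z) n ≤ codingCount f Y n :=
    hA ▸ codingCount_comp_le (Fin.succAbove_right_injective (p := 1))
  have hBY (n : ℕ) : codingCount f (Fin.cons B Z) n ≤ codingCount f Y n :=
    hB ▸ codingCount_comp_le (Fin.succAbove_right_injective (p := 0))
  have hYAB (n : ℕ) :
      codingCount f Y n ≤ codingCount f (Fin.cons B Z) n + codingCount f (Fin.cons A Z) n :=
    hA ▸ hB ▸ codingCount_le_add_of_wandering zero_ne_one hwand n
  refine ⟨1, 2, one_pos, two_pos, fun n => ⟨?_, ?_⟩⟩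
  · rw [one_mul]
    exact max_le (by exact_mod_cast hAY n) (by exact_mod_cast hBY n)
  · calc (codingCount f Y n : ℝ)
        ≤ codingCount f (Fin.cons B Z) n + codingCount f (Fin.cons A Z) n := by
          exact_mod_cast hYAB n
      _ ≤ 2 * max (codingCount f (Fin.cons A Z) n : ℝ) (codingCount f (Fin.cons B Z) n) := by
          rw [two_mul, add_comm]
          exact add_le_add (le_max_left _ _) (le_max_right _ _)

/-- if Y₁ ∪ Y₂ is wandering, then [c_{f,ℱ}(n)] = sup{[c_{f,ℱ₁}(n)], [c_{f,ℱ₂}(n)]},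
where ℱ = {Y₁,Y₂,Y₃,…}, ℱ₁ omits Y₂ and ℱ₂ omits Y₁; the supremum of two classes is the
class of the pointwise maximum, so the equality is stated via two-sided constants. -/
theorem coding_count_union_wandering {M : Type*} [MetricSpace M] [CompactSpace M] (f : M ≃ₜ M)
    {L : ℕ} (A B : Set M) (Z : Fin L → Set M)
    (hwand : Wandering ⇑f (A ∪ B)) :
    ∃ c₁ c₂ : ℝ, 0 < c₁ ∧ 0 < c₂ ∧ ∀ n : ℕ,
      c₁ * max (codingCount ⇑f (Fin.cons A Z) n : ℝ) (codingCount ⇑f (Fin.cons B Z) n : ℝ) ≤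
          (codingCount ⇑f (Fin.cons A (Fin.cons B Z)) n : ℝ) ∧
      (codingCount ⇑f (Fin.cons A (Fin.cons B Z)) n : ℝ) ≤
          c₂ * max (codingCount ⇑f (Fin.cons A Z) n : ℝ) (codingCount ⇑f (Fin.cons B Z) n : ℝ) :=
  coding_count_union_wandering_general f A B Z hwand
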